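/- arXiv:1808.01830 — 3 statements merged into one kernel-verified Lean document; each statement's English description precedes it below -/
import Mathlib

section
/- Let 0 < p < 1/2, q = 1 − p, and for k ≥ 1 let A_k be the (k+1)×(k+1) strong-reflection matrix. Then for every complex z with |z| < 1 the series G_k(z) = Σ_{n=0}^∞ P(M_n ≤ k) zⁿ converges and equals 1ᵀ (I − z A_k)^{−1} e₀ = det(B_k(z)) / det(I − z A_k), where B_k(z) is the matrix I − z A_k with its first row (index 0) replaced by the all-ones row vector. -/
open Matrix BigOperators

/-- The `(k+1) × (k+1)` strong-reflection matrix over `ℂ`: nonzero entries are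
`A(0,1) = 1-p`, `A(1,0) = 1`, `A(i,i-1) = p` for `2 ≤ i ≤ k`,
`A(i,i+1) = 1-p` for `1 ≤ i ≤ k-1`. -/
noncomputable def strongA (p : ℝ) (k : ℕ) : Matrix (Fin (k + 1)) (Fin (k + 1)) ℂ :=
  fun i j =>
    if (i : ℕ) = 0 ∧ (j : ℕ) = 1 then 1 - (p : ℂ)
    else if (i : ℕ) = 1 ∧ (j : ℕ) = 0 then 1
    else if 2 ≤ (i : ℕ) ∧ (j : ℕ) + 1 = (i : ℕ) then (p : ℂ)
    else if 1 ≤ (i : ℕ) ∧ (j : ℕ) = (i : ℕ) + 1 then 1 - (p : ℂ)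
    else 0

/-- The strongly reflected walk: `S_0 = 0`, `S_{j+1} = |S_j + X_{j+1}|`. -/
def strongS (σ : ℕ → Bool) : ℕ → ℤ
  | 0 => 0
  | j + 1 => |strongS σ j + (if σ j then 1 else -1)|

/-- The maximum `M_n = max_{0 ≤ j ≤ n} S_j` of the strongly reflected walk. -/
def strongM (σ : ℕ → Bool) (n : ℕ) : ℤ :=
  (Finset.range (n + 1)).sup' Finset.nonempty_range_add_one (fun j => strongS σ j)

/-- `P(M_n ≤ k)` for the strongly reflected walk whose i.i.d. steps are `+1` with
probability `p` and `-1` with probability `1 - p`. -/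
noncomputable def strongProbLe (p : ℝ) (n k : ℕ) : ℝ :=
  ∑ σ : Fin n → Bool,
    (∏ i, if σ i then p else 1 - p) *
      (if strongM (fun j => if h : j < n then σ ⟨j, h⟩ else false) n ≤ (k : ℤ) then 1 else 0)

/-!
Let `vₙ(i)` be the probability that the walk has stayed in `{0, …, k}` up to time `n` and sits
at `i`. Splitting off the last step gives `vₙ₊₁ = A_k vₙ` and `v₀ = e₀`, so
`P(M_n ≤ k) = 1ᵀ A_kⁿ e₀`. Each column of `A_k` has total mass at most `1`, so `(z A_k)ᵀ` has
`ℓ∞`-operator norm `< 1` and the Neumann series `∑ (z A_k)ⁿ` converges to `(I - z A_k)⁻¹`.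
The determinant formula is Cramer's rule for the row vector `1ᵀ (I - z A_k)⁻¹`.
-/

namespace Matrix

variable {n K : Type*} [Fintype n] [DecidableEq n]

theorem dotProduct_inv_mulVec_single [Field K] (M : Matrix n n K) (u : n → K) (j : n) :
    u ⬝ᵥ (M⁻¹ *ᵥ Pi.single j 1) = (M.updateRow j u).det / M.det := by
  rw [dotProduct_mulVec, dotProduct_single_one, ← mulVec_transpose, transpose_nonsing_inv,
    inv_def, smul_mulVec, ← cramer_eq_adjugate_mulVec, Pi.smul_apply, cramer_apply,
    updateCol_transpose, det_transpose, det_transpose, Ring.inverse_eq_inv', smul_eq_mul,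
    div_eq_inv_mul]

open scoped Norms.Operator in
theorem hasSum_pow_of_norm_lt_one [NormedField K] [CompleteSpace K] {T : Matrix n n K}
    (hT : ‖T‖ < 1) : HasSum (fun i => T ^ i) (1 - T)⁻¹ := by
  -- the operator-norm uniformity is the product one only up to unfolding, which instance
  -- search does not see
  have hcomplete : CompleteSpace (Matrix n n K) := inferInstance
  have := @instHasSummableGeomSeriesOfCompleteSpace (Matrix n n K) _ hcomplete
  rw [inv_eq_right_inv (mul_neg_geom_series T hT)]
  exact (summable_geometric_of_norm_lt_one hT).hasSum

open scoped Norms.Operator in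
theorem hasSum_pow_of_norm_transpose_lt_one [NormedField K] [CompleteSpace K]
    {T : Matrix n n K} (hT : ‖Tᵀ‖ < 1) : HasSum (fun i => T ^ i) (1 - T)⁻¹ := by
  simpa only [transpose_pow, transpose_transpose, transpose_nonsing_inv, transpose_sub,
    transpose_one] using (hasSum_pow_of_norm_lt_one hT).matrix_transpose

end Matrix

theorem HasSum.dotProduct_mulVec {ι m n R : Type*} [Fintype m] [Fintype n]
    [NonUnitalNonAssocSemiring R] [TopologicalSpace R] [IsTopologicalSemiring R]
    {X : ι → Matrix m n R} {S : Matrix m n R} (hX : HasSum X S) (u : m → R) (v : n → R) :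
    HasSum (fun t => u ⬝ᵥ (X t *ᵥ v)) (u ⬝ᵥ (S *ᵥ v)) :=
  hasSum_sum fun i _ => (hasSum_sum fun j _ =>
    ((Pi.hasSum.1 (Pi.hasSum.1 hX i) j).mul_right (v j))).mul_left (u i)

section StronglyReflectedWalk

variable (τ τ' : ℕ → Bool) (n : ℕ)

theorem strongS_nonneg : 0 ≤ strongS τ n := by
  cases n <;> simp [strongS]

theorem strongS_congr (h : ∀ j < n, τ j = τ' j) : strongS τ n = strongS τ' n := by
  induction n with
  | zero => rfl
  | succ n ih => simp only [strongS, ih fun j hj => h j (by omega), h n n.lt_succ_self]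

theorem strongM_congr (h : ∀ j < n, τ j = τ' j) : strongM τ n = strongM τ' n :=
  Finset.sup'_congr _ rfl fun j hj =>
    strongS_congr τ τ' j fun i hi => h i (by simp at hj; omega)

theorem strongM_le_iff (K : ℤ) : strongM τ n ≤ K ↔ ∀ j ≤ n, strongS τ j ≤ K := by
  simp [strongM]

theorem strongS_le_strongM : strongS τ n ≤ strongM τ n :=
  (strongM_le_iff τ n _).1 le_rfl n le_rfl

theorem strongM_succ_le_iff (K : ℤ) :
    strongM τ (n + 1) ≤ K ↔ strongM τ n ≤ K ∧ strongS τ (n + 1) ≤ K := by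
  simp only [strongM_le_iff, Nat.le_succ_iff, or_imp, forall_and, forall_eq]

/-- Column `j` is the indicator of the position `|j ± 1|`; it vanishes when that position is
`k + 1`, so the walk is killed when it leaves `{0, …, k}`. -/
def reflectStep (k : ℕ) (b : Bool) : Matrix (Fin (k + 1)) (Fin (k + 1)) ℂ :=
  of fun i j => if ((i : ℕ) : ℤ) = |((j : ℕ) : ℤ) + (if b then 1 else -1)| then 1 else 0

noncomputable def survivalIndicator (k : ℕ) : Fin (k + 1) → ℂ :=
  fun i => if strongM τ n ≤ k ∧ strongS τ n = ((i : ℕ) : ℤ) then 1 else 0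

variable {τ τ' n} {k : ℕ}

theorem survivalIndicator_of_le (h : strongM τ n ≤ k) :
    survivalIndicator τ n k =
      Pi.single ⟨(strongS τ n).toNat, by have := strongS_le_strongM τ n; omega⟩ 1 := by
  have := strongS_nonneg τ n
  ext i
  simp only [survivalIndicator, h, true_and, Pi.single_apply, Fin.ext_iff]
  congr 1
  apply propext
  omega

theorem survivalIndicator_of_not_le (h : ¬strongM τ n ≤ k) : survivalIndicator τ n k = 0 := by
  ext i
  simp [survivalIndicator, h]

theorem survivalIndicator_succ :
    survivalIndicator τ (n + 1) k = reflectStep k (τ n) *ᵥ survivalIndicator τ n k := by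
  by_cases h : strongM τ n ≤ k
  · rw [survivalIndicator_of_le h, mulVec_single_one]
    ext i
    have := strongS_nonneg τ n
    simp only [survivalIndicator, strongM_succ_le_iff, h, true_and, col_apply, reflectStep,
      of_apply, strongS, Int.toNat_of_nonneg this]
    congr 1
    refine propext ⟨fun h => h.2.symm, fun h => ⟨?_, h.symm⟩⟩
    rw [← h]
    exact_mod_cast Nat.lt_succ_iff.1 i.isLt
  · have h' : ¬strongM τ (n + 1) ≤ k := fun h' => h ((strongM_succ_le_iff τ n k).1 h').1
    rw [survivalIndicator_of_not_le h, survivalIndicator_of_not_le h', mulVec_zero]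

theorem survivalIndicator_congr (h : ∀ j < n, τ j = τ' j) :
    survivalIndicator τ n k = survivalIndicator τ' n k := by
  unfold survivalIndicator
  rw [strongS_congr τ τ' n h, strongM_congr τ τ' n h]

theorem sum_survivalIndicator :
    ∑ i, survivalIndicator τ n k i = if strongM τ n ≤ k then 1 else 0 := by
  by_cases h : strongM τ n ≤ k
  · simp [survivalIndicator_of_le h, h]
  · simp [survivalIndicator_of_not_le h, h]

end StronglyReflectedWalk

section PathSums

variable {n : ℕ} (p : ℝ) (k : ℕ)

def pathExt (σ : Fin n → Bool) : ℕ → Bool := fun j => if h : j < n then σ ⟨j, h⟩ else false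

theorem pathExt_snoc_of_lt (σ : Fin n → Bool) (b : Bool) {j : ℕ} (hj : j < n) :
    pathExt (Fin.snoc σ b : Fin (n + 1) → Bool) j = pathExt σ j := by
  simp [pathExt, hj, Nat.lt_succ_of_lt hj, Fin.snoc, Fin.castLT]

theorem pathExt_snoc_self (σ : Fin n → Bool) (b : Bool) :
    pathExt (Fin.snoc σ b : Fin (n + 1) → Bool) n = b := by
  simp [pathExt, Fin.snoc]

theorem survivalIndicator_pathExt_snoc (σ : Fin n → Bool) (b : Bool) :
    survivalIndicator (pathExt (Fin.snoc σ b : Fin (n + 1) → Bool)) (n + 1) k =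
      reflectStep k b *ᵥ survivalIndicator (pathExt σ) n k := by
  rw [survivalIndicator_succ, pathExt_snoc_self,
    survivalIndicator_congr fun j hj => pathExt_snoc_of_lt σ b hj]

noncomputable def stepWeight (b : Bool) : ℂ := if b then (p : ℂ) else 1 - p

theorem strongA_eq_sum : strongA p k = ∑ b, stepWeight p b • reflectStep k b := by
  ext i j
  have hi := i.isLt
  have hj := j.isLt
  have hup : |((j : ℕ) : ℤ) + 1| = (j : ℕ) + 1 := abs_of_nonneg (by positivity)
  have hdown : |((j : ℕ) : ℤ) + -1| = if (j : ℕ) = 0 then (1 : ℤ) else ((j : ℕ) : ℤ) - 1 := by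
    split_ifs with hj0
    · simp [hj0]
    · exact abs_of_nonneg (by omega)
  simp only [strongA, stepWeight, reflectStep, Fintype.sum_bool, Matrix.add_apply,
    Matrix.smul_apply, of_apply, if_true, Bool.false_eq_true, if_false, smul_eq_mul, hup, hdown]
  split_ifs <;> first | ring1 | (exfalso; omega)

noncomputable def survivalVec (n : ℕ) : Fin (k + 1) → ℂ :=
  ∑ σ : Fin n → Bool, (∏ t, stepWeight p (σ t)) • survivalIndicator (pathExt σ) n k

theorem survivalVec_succ : survivalVec p k (n + 1) = strongA p k *ᵥ survivalVec p k n := by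
  have hsnoc (b : Bool) (σ : Fin n → Bool) : Fin.snocEquiv (fun _ => Bool) (b, σ) = Fin.snoc σ b :=
    rfl
  rw [survivalVec, ← (Fin.snocEquiv fun _ => Bool).sum_comp, Fintype.sum_prod_type]
  simp only [hsnoc, Fin.prod_univ_castSucc, Fin.snoc_castSucc, Fin.snoc_last,
    survivalIndicator_pathExt_snoc, strongA_eq_sum, survivalVec, sum_mulVec, mulVec_sum,
    smul_mulVec, mulVec_smul, mul_smul, Finset.smul_sum]
  exact Finset.sum_comm

theorem survivalVec_zero : survivalVec p k 0 = Pi.single 0 1 := by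
  have h : strongM (pathExt (Fin.elim0 : Fin 0 → Bool)) 0 ≤ k := by
    simp [strongM, strongS]
  rw [survivalVec, Fintype.sum_unique, Finset.univ_eq_empty, Finset.prod_empty, one_smul]
  exact survivalIndicator_of_le h

theorem survivalVec_eq_pow_mulVec (n : ℕ) :
    survivalVec p k n = strongA p k ^ n *ᵥ Pi.single 0 1 := by
  induction n with
  | zero => rw [survivalVec_zero, pow_zero, one_mulVec]
  | succ n ih => rw [survivalVec_succ, ih, mulVec_mulVec, pow_succ']

theorem strongProbLe_eq_dotProduct (n : ℕ) :
    (strongProbLe p n k : ℂ) = (fun _ => 1) ⬝ᵥ (strongA p k ^ n *ᵥ Pi.single 0 1) := by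
  rw [← survivalVec_eq_pow_mulVec]
  change _ = 1 ⬝ᵥ _
  rw [one_dotProduct, survivalVec]
  simp only [Finset.sum_apply, Pi.smul_apply, smul_eq_mul]
  rw [Finset.sum_comm]
  simp only [← Finset.mul_sum, sum_survivalIndicator, strongProbLe, stepWeight]
  push_cast [apply_ite ((↑) : ℝ → ℂ)]
  rfl

end PathSums

section Norms

open scoped Matrix.Norms.Operator

theorem norm_transpose_reflectStep_le_one (k : ℕ) (b : Bool) : ‖(reflectStep k b)ᵀ‖ ≤ 1 := by
  rw [linfty_opNorm_def, NNReal.coe_le_one]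
  refine Finset.sup_le fun j _ => ?_
  simp only [transpose_apply, reflectStep, of_apply, apply_ite nnnorm, nnnorm_one, nnnorm_zero,
    Finset.sum_boole]
  exact_mod_cast Finset.card_le_one.2 fun a ha b hb => by
    simp only [Finset.mem_filter] at ha hb
    exact Fin.ext (by omega)

theorem norm_transpose_strongA_le_one {p : ℝ} (hp0 : 0 ≤ p) (hp1 : p ≤ 1) (k : ℕ) :
    ‖(strongA p k)ᵀ‖ ≤ 1 := by
  rw [strongA_eq_sum, transpose_sum]
  calc ‖∑ b, (stepWeight p b • reflectStep k b)ᵀ‖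
      ≤ ∑ b, ‖stepWeight p b‖ := norm_sum_le_of_le _ fun b _ => by
        rw [transpose_smul]
        exact (norm_smul_le _ _).trans
          (mul_le_of_le_one_right (norm_nonneg _) (norm_transpose_reflectStep_le_one k b))
    _ = 1 := by
      have h1p : (1 : ℂ) - p = ((1 - p : ℝ) : ℂ) := by push_cast; ring
      simp only [Fintype.sum_bool, stepWeight, if_true, Bool.false_eq_true, if_false, h1p,
        Complex.norm_real, Real.norm_of_nonneg hp0, Real.norm_of_nonneg (sub_nonneg.2 hp1)]
      ring

theorem hasSum_pow_smul_strongA {p : ℝ} (hp0 : 0 ≤ p) (hp1 : p ≤ 1) (k : ℕ) {z : ℂ}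
    (hz : ‖z‖ < 1) : HasSum (fun n => (z • strongA p k) ^ n) (1 - z • strongA p k)⁻¹ := by
  refine hasSum_pow_of_norm_transpose_lt_one ?_
  calc ‖(z • strongA p k)ᵀ‖ ≤ ‖z‖ * ‖(strongA p k)ᵀ‖ := by
        rw [transpose_smul]; exact norm_smul_le _ _
    _ ≤ ‖z‖ := mul_le_of_le_one_right (norm_nonneg z) (norm_transpose_strongA_le_one hp0 hp1 k)
    _ < 1 := hz

end Norms

theorem strong_generating_function_general (p : ℝ) (hp0 : 0 < p) (hp : p < 1 / 2)
    (k : ℕ) (z : ℂ) (hz : ‖z‖ < 1) :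
    HasSum (fun n : ℕ => (strongProbLe p n k : ℂ) * z ^ n)
      ((fun _ : Fin (k + 1) => (1 : ℂ)) ⬝ᵥ
        (1 - z • strongA p k)⁻¹.mulVec (fun i => if i = 0 then 1 else 0)) ∧
    (fun _ : Fin (k + 1) => (1 : ℂ)) ⬝ᵥ
        (1 - z • strongA p k)⁻¹.mulVec (fun i => if i = 0 then 1 else 0) =
      ((1 - z • strongA p k).updateRow 0 (fun _ => 1)).det / (1 - z • strongA p k).det := by
  have he₀ : (fun i : Fin (k + 1) => if i = 0 then (1 : ℂ) else 0) = Pi.single 0 1 := by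
    ext i
    simp [Pi.single_apply]
  rw [he₀]
  refine ⟨?_, dotProduct_inv_mulVec_single _ _ _⟩
  have hterm (n : ℕ) : (strongProbLe p n k : ℂ) * z ^ n =
      (fun _ => 1) ⬝ᵥ ((z • strongA p k) ^ n *ᵥ Pi.single 0 1) := by
    rw [strongProbLe_eq_dotProduct, smul_pow, smul_mulVec, dotProduct_smul, smul_eq_mul, mul_comm]
  simpa only [hterm] using (hasSum_pow_smul_strongA hp0.le (by linarith) k hz).dotProduct_mulVec
    (fun _ => 1) (Pi.single 0 1)

/-- For `|z| < 1`, the generating function `G_k(z) = Σ_n P(M_n ≤ k) zⁿ` converges to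
`1ᵀ (I - z A_k)⁻¹ e₀`, which equals `det B_k(z) / det (I - z A_k)`, where `B_k(z)` is
`I - z A_k` with its first row replaced by the all-ones row. -/
theorem strong_generating_function (p q : ℝ) (hp0 : 0 < p) (hp : p < 1 / 2)
    (hq : q = 1 - p) (k : ℕ) (hk : 1 ≤ k) (z : ℂ) (hz : ‖z‖ < 1) :
    HasSum (fun n : ℕ => (strongProbLe p n k : ℂ) * z ^ n)
      ((fun _ : Fin (k + 1) => (1 : ℂ)) ⬝ᵥ
        (1 - z • strongA p k)⁻¹.mulVec (fun i => if i = 0 then 1 else 0)) ∧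
    (fun _ : Fin (k + 1) => (1 : ℂ)) ⬝ᵥ
        (1 - z • strongA p k)⁻¹.mulVec (fun i => if i = 0 then 1 else 0) =
      ((1 - z • strongA p k).updateRow 0 (fun _ => 1)).det / (1 - z • strongA p k).det :=
  strong_generating_function_general p hp0 hp k z hz
end

section
/- Let 0 < p < 1/2 and q = 1 − p. Let R_k(z) be the polynomials defined by R_0(z) = 1, R_1(z) = 1 − q z², and R_k(z) = R_{k−1}(z) − p q z² R_{k−2}(z) for k ≥ 2. Then for every real z with 0 < z < 1/(2√(pq)), setting t = √(1 − 4 p q z²), u = ((1+t)/(2p))(−1 + 2p + t) and v = ((1−t)/(2p))(1 − 2p + t), one has for all k ≥ 0: R_k(z) = (1/(2t)) [ u ((1+t)/2)^k + v ((1−t)/2)^k ]. -/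
/-- The polynomials `R_k` for the strong scenario:
`R_0(z) = 1`, `R_1(z) = 1 - (1-p) z²`, `R_k(z) = R_{k-1}(z) - p (1-p) z² R_{k-2}(z)`. -/
noncomputable def Rrec (p z : ℝ) : ℕ → ℝ
  | 0 => 1
  | 1 => 1 - (1 - p) * z ^ 2
  | (k + 2) => Rrec p z (k + 1) - p * (1 - p) * z ^ 2 * Rrec p z k

/-!
The roots of the characteristic equation `x² = x - p q z²` of the recurrence are `(1 ± t)/2`,
so `R_k` is a combination `A ((1+t)/2)^k + B ((1-t)/2)^k`; the coefficients `u/(2t)` and `v/(2t)`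
are the ones matching `R_0` and `R_1`. The bound on `z` is exactly what makes `t` real and
nonzero.
-/

theorem eq_add_pow_of_two_step_recurrence {R : Type*} [CommRing R] {a b r s A B : R}
    {f : ℕ → R} (hr : r ^ 2 = a * r + b) (hs : s ^ 2 = a * s + b)
    (hf : ∀ k, f (k + 2) = a * f (k + 1) + b * f k)
    (h0 : f 0 = A + B) (h1 : f 1 = A * r + B * s) (k : ℕ) :
    f k = A * r ^ k + B * s ^ k := by
  induction k using Nat.twoStepInduction with
  | zero => simpa using h0
  | one => simpa using h1
  | more k ih₀ ih₁ =>
    rw [hf, ih₀, ih₁]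
    linear_combination (-A * r ^ k) * hr + (-B * s ^ k) * hs

theorem Rrec_add_two (p z : ℝ) (k : ℕ) :
    Rrec p z (k + 2) = Rrec p z (k + 1) - p * (1 - p) * z ^ 2 * Rrec p z k :=
  rfl

theorem four_mul_mul_sq_lt_one_of_lt_one_div_two_mul_sqrt {c z : ℝ} (hz : 0 ≤ z)
    (h : z < 1 / (2 * √c)) : 4 * c * z ^ 2 < 1 := by
  rcases le_or_gt c 0 with hc | hc
  · nlinarith [sq_nonneg z]
  · have hsqrt : 0 < √c := Real.sqrt_pos.mpr hc
    have hlt : 2 * √c * z < 1 := by rwa [lt_div_iff₀ (by positivity), mul_comm] at h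
    have hsq : (2 * √c * z) ^ 2 < 1 := by nlinarith [mul_nonneg hsqrt.le hz]
    rw [mul_pow, mul_pow, Real.sq_sqrt hc.le] at hsq
    linarith

theorem strong_R_closed_form_general (p q : ℝ) (hp0 : 0 < p) (hq : q = 1 - p)
    (z : ℝ) (hz0 : 0 < z) (hz1 : z < 1 / (2 * Real.sqrt (p * q)))
    (t u v : ℝ) (ht : t = Real.sqrt (1 - 4 * p * q * z ^ 2))
    (hu : u = (1 + t) / (2 * p) * (-1 + 2 * p + t))
    (hv : v = (1 - t) / (2 * p) * (1 - 2 * p + t)) :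
    ∀ k : ℕ,
      Rrec p z k = 1 / (2 * t) * (u * ((1 + t) / 2) ^ k + v * ((1 - t) / 2) ^ k) := by
  have hdisc : 0 < 1 - 4 * p * q * z ^ 2 := by
    linarith [four_mul_mul_sq_lt_one_of_lt_one_div_two_mul_sqrt hz0.le hz1]
  have ht0 : t ≠ 0 := by rw [ht]; exact (Real.sqrt_pos.mpr hdisc).ne'
  have ht2 : t ^ 2 = 1 - 4 * p * q * z ^ 2 := by rw [ht, Real.sq_sqrt hdisc.le]
  subst hq hu hv
  have hp_ne : p ≠ 0 := hp0.ne'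
  intro k
  rw [eq_add_pow_of_two_step_recurrence (f := Rrec p z) (a := 1) (b := -(p * (1 - p) * z ^ 2))
    (r := (1 + t) / 2) (s := (1 - t) / 2)
    (A := (1 + t) / (2 * p) * (-1 + 2 * p + t) / (2 * t))
    (B := (1 - t) / (2 * p) * (1 - 2 * p + t) / (2 * t))
    (by linear_combination ht2 / 4) (by linear_combination ht2 / 4)
    (fun k => by rw [Rrec_add_two]; ring)
    (by simp only [Rrec]; field_simp; ring)
    (by simp only [Rrec]; field_simp; linear_combination (-2 * t) * ht2) k]
  ring

/-- Explicit solution of the strong-scenario recurrence: with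
`t = √(1 - 4 p q z²)`, `u = ((1+t)/(2p))(-1+2p+t)`, `v = ((1-t)/(2p))(1-2p+t)`,
`R_k(z) = (1/(2t)) [u ((1+t)/2)^k + v ((1-t)/2)^k]` for all `k ≥ 0`. -/
theorem strong_R_closed_form (p q : ℝ) (hp0 : 0 < p) (hp : p < 1 / 2) (hq : q = 1 - p)
    (z : ℝ) (hz0 : 0 < z) (hz1 : z < 1 / (2 * Real.sqrt (p * q)))
    (t u v : ℝ) (ht : t = Real.sqrt (1 - 4 * p * q * z ^ 2))
    (hu : u = (1 + t) / (2 * p) * (-1 + 2 * p + t))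
    (hv : v = (1 - t) / (2 * p) * (1 - 2 * p + t)) :
    ∀ k : ℕ,
      Rrec p z k = 1 / (2 * t) * (u * ((1 + t) / 2) ^ k + v * ((1 - t) / 2) ^ k) :=
  strong_R_closed_form_general p q hp0 hq z hz0 hz1 t u v ht hu hv
end

section
/- Let 0 < p < 1/2 and q = 1 − p. There exists K such that for every integer k ≥ K, the equation ((1+t)/(1−t))^{k+1} = (1 − 2p + t)/(1 − 2p − t) has exactly one complex solution t with positive real part (and t ≠ 1, t ≠ 1 − 2p); moreover this solution t_k is real and satisfies 0 < t_k < 1. -/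
open Polynomial Complex Set Filter ComplexConjugate
open scoped Real

/-!
The substitution `u = (1 + t) / (1 - t)` maps the half-plane `0 < re t` onto `1 < ‖u‖` and, with
`b = p / q`, turns the equation into `u ^ (k + 1) * (1 - b u) = u - b`, that is, into a root of
the polynomial `b X ^ (k + 2) - X ^ (k + 1) + X - b` of degree `k + 2`.

This polynomial has `k` roots on the unit circle: for `u = exp (iθ)` and `w = 1 - b u` the
equation reads `u ^ k = conj w / w`, i.e. `kθ + 2 arg w ∈ 2πℤ`, and the intermediate value
theorem gives a solution `θ ∈ [0, 2π)` for each of the `k` values `2πj`, `0 ≤ j < k`.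
For large `k` it also has a real root `x ∈ (1, 1/b)`: it is negative at a fixed `c ∈ (1, 1/b)`
once `c ^ (k + 1)` is large, and positive at `1/b`. Since `X ^ (k + 2) P (1/X) = -P (X)`, `x⁻¹`
is a root as well. The degree leaves no room for a further root with `1 < ‖u‖`, and `x`
corresponds to the real solution `t = (x - 1) / (x + 1) ∈ (0, 1)`.
-/

/-- Its roots solve `u ^ (k + 1) = (u - b) / (1 - b u)`, a power against a Blaschke factor. -/
noncomputable def blaschkePoly {R : Type*} [CommRing R] (b : R) (k : ℕ) : R[X] :=
  C b * X ^ (k + 2) - X ^ (k + 1) + X - C b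

section Polynomial

variable {R : Type*} [CommRing R]

@[simp]
lemma eval_blaschkePoly (b z : R) (k : ℕ) :
    (blaschkePoly b k).eval z = b * z ^ (k + 2) - z ^ (k + 1) + z - b := by
  simp [blaschkePoly]

lemma natDegree_blaschkePoly_le (b : R) (k : ℕ) : (blaschkePoly b k).natDegree ≤ k + 2 := by
  unfold blaschkePoly; compute_degree

lemma blaschkePoly_ne_zero {b : R} (hb : b ≠ 0) (k : ℕ) : blaschkePoly b k ≠ 0 := by
  intro h
  have := congrArg (coeff · (k + 2)) h
  simp [blaschkePoly, coeff_X] at this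
  exact hb this

lemma card_le_of_forall_isRoot_blaschkePoly [IsDomain R] {b : R} (hb : b ≠ 0) {k : ℕ}
    {S : Finset R} (hS : ∀ z ∈ S, (blaschkePoly b k).IsRoot z) : S.card ≤ k + 2 :=
  (card_le_degree_of_subset_roots fun z hz ↦
    (mem_roots (blaschkePoly_ne_zero hb k)).2 (hS z hz)).trans (natDegree_blaschkePoly_le b k)

lemma isRoot_blaschkePoly_inv {K : Type*} [Field K] {b z : K} {k : ℕ}
    (hz : (blaschkePoly b k).IsRoot z) : (blaschkePoly b k).IsRoot z⁻¹ := by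
  rcases eq_or_ne z 0 with rfl | hz0
  · simpa using hz
  simp only [IsRoot, eval_blaschkePoly] at hz ⊢
  have key : z ^ (k + 2) * (b * z⁻¹ ^ (k + 2) - z⁻¹ ^ (k + 1) + z⁻¹ - b)
      = -(b * z ^ (k + 2) - z ^ (k + 1) + z - b) := by
    simp only [inv_pow]
    field_simp
    ring
  rw [hz, neg_zero] at key
  exact (mul_eq_zero.1 key).resolve_left (pow_ne_zero _ hz0)

lemma isRoot_blaschkePoly_ofReal {b x : ℝ} {k : ℕ} :
    (blaschkePoly (b : ℂ) k).IsRoot x ↔ (blaschkePoly b k).IsRoot x := by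
  simp only [IsRoot, eval_blaschkePoly]
  norm_cast

end Polynomial

lemma isRoot_blaschkePoly_exp_mul_I {b θ : ℝ} {k : ℕ} {j : ℤ}
    (h : k * θ + 2 * arg (1 - b * cexp (θ * I)) = 2 * π * j) :
    (blaschkePoly (b : ℂ) k).IsRoot (cexp (θ * I)) := by
  set u := cexp (θ * I)
  set w := 1 - (b : ℂ) * u
  have hu : u * conj u = 1 := by
    rw [mul_conj, normSq_eq_norm_sq, norm_exp_ofReal_mul_I]; simp
  have hw : u ^ k * w = conj w := by
    rcases eq_or_ne w 0 with hw0 | hw0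
    · simp [hw0]
    refine mul_right_cancel₀ hw0 ?_
    have hw2 : w ^ 2 = ‖w‖ ^ 2 * cexp (2 * arg w * I) := by
      conv_lhs => rw [← norm_mul_exp_arg_mul_I w]
      rw [mul_pow, ← exp_nat_mul]
      ring_nf
    have hwk : u ^ k * w ^ 2 = (‖w‖ : ℂ) ^ 2 := by
      calc u ^ k * w ^ 2 = (‖w‖ : ℂ) ^ 2 * cexp ((k * θ + 2 * arg w : ℝ) * I) := by
            rw [hw2, ← exp_nat_mul, mul_left_comm, ← exp_add]
            push_cast
            ring_nf
        _ = (‖w‖ : ℂ) ^ 2 := by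
            rw [h]
            push_cast
            rw [show 2 * π * (j : ℂ) * I = j * (2 * π * I) by ring, exp_int_mul_two_pi_mul_I,
              mul_one]
    rw [mul_comm (conj w), mul_conj, normSq_eq_norm_sq]
    push_cast
    linear_combination hwk
  simp only [w, map_sub, map_one, map_mul, conj_ofReal] at hw
  simp only [IsRoot, eval_blaschkePoly]
  linear_combination (-u) * hw + (b : ℂ) * hu

lemma continuous_arg_one_sub_mul_exp {b : ℝ} (hb : |b| < 1) :
    Continuous fun θ : ℝ ↦ arg (1 - b * cexp (θ * I)) := by
  refine continuous_iff_continuousAt.2 fun θ ↦ (continuousAt_arg ?_).comp (by fun_prop)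
  refine mem_slitPlane_iff.2 (Or.inl ?_)
  have hcos : b * Real.cos θ ≤ |b| := by
    calc b * Real.cos θ ≤ |b * Real.cos θ| := le_abs_self _
      _ ≤ |b| := by
        rw [abs_mul]; exact mul_le_of_le_one_right (abs_nonneg b) (Real.abs_cos_le_one θ)
  simp only [sub_re, one_re, re_ofReal_mul, exp_ofReal_mul_I_re]
  linarith

lemma exists_angle_eq {b : ℝ} (hb : |b| < 1) {k j : ℕ} (hj : j < k) :
    ∃ θ ∈ Ico 0 (2 * π), k * θ + 2 * arg (1 - b * cexp (θ * I)) = 2 * π * j := by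
  set g : ℝ → ℝ := fun θ ↦ k * θ + 2 * arg (1 - b * cexp (θ * I))
  have harg : arg (1 - b) = 0 := by
    rw [← ofReal_one, ← ofReal_sub, arg_ofReal_of_nonneg (by linarith [le_abs_self b])]
  have hg0 : g 0 = 0 := by simp [g, harg]
  have hg2π : g (2 * π) = 2 * π * k := by
    simp only [g]
    push_cast
    rw [exp_two_pi_mul_I, mul_one, harg]
    ring
  have hmem : 2 * π * j ∈ Ico (g 0) (g (2 * π)) := by
    rw [hg0, hg2π]
    have : (j : ℝ) < k := by exact_mod_cast hj
    constructor <;> nlinarith [Real.pi_pos]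
  have hg : Continuous g := by
    have := continuous_arg_one_sub_mul_exp hb
    fun_prop
  exact intermediate_value_Ico Real.two_pi_pos.le hg.continuousOn hmem

lemma exists_finset_roots_blaschkePoly_norm_eq_one {b : ℝ} (hb : |b| < 1) (k : ℕ) :
    ∃ T : Finset ℂ, T.card = k ∧
      ∀ z ∈ T, ‖z‖ = 1 ∧ (blaschkePoly (b : ℂ) k).IsRoot z := by
  choose θ hθ hθg using fun j : Fin k ↦ exists_angle_eq hb j.isLt
  have hinj : Function.Injective fun j ↦ cexp (θ j * I) := by
    intro i j hij
    have hθij : θ i = θ j :=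
      Circle.exp_injOn_Ico (by simp) (hθ i) (hθ j) (Subtype.ext hij)
    have := (hθg i).symm.trans (hθij ▸ hθg j)
    ext
    exact_mod_cast mul_left_cancel₀ Real.two_pi_pos.ne' this
  refine ⟨Finset.univ.image fun j ↦ cexp (θ j * I), ?_, ?_⟩
  · rw [Finset.card_image_of_injective _ hinj, Finset.card_univ, Fintype.card_fin]
  · simp only [Finset.mem_image, Finset.mem_univ, true_and, forall_exists_index,
      forall_apply_eq_imp_iff]
    exact fun j ↦ ⟨norm_exp_ofReal_mul_I _, isRoot_blaschkePoly_exp_mul_I (j := j) (by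
      exact_mod_cast hθg j)⟩

lemma eventually_exists_isRoot_blaschkePoly_mem_Ioo {b : ℝ} (hb0 : 0 < b) (hb1 : b < 1) :
    ∀ᶠ k in atTop, ∃ x ∈ Ioo 1 b⁻¹, (blaschkePoly b k).IsRoot x := by
  obtain ⟨c, hc1, hcb⟩ := exists_between (one_lt_inv_iff₀.2 ⟨hb0, hb1⟩)
  have hbc : 0 < 1 - b * c := by
    have := mul_lt_mul_of_pos_left hcb hb0
    rw [mul_inv_cancel₀ hb0.ne'] at this
    linarith
  have hpow := ((tendsto_pow_atTop_atTop_of_one_lt hc1).comp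
    (tendsto_add_atTop_nat 1)).eventually_gt_atTop ((c - b) / (1 - b * c))
  filter_upwards [hpow] with k hk
  have hneg : (blaschkePoly b k).eval c < 0 := by
    rw [Function.comp_apply, div_lt_iff₀ hbc] at hk
    rw [eval_blaschkePoly]
    linear_combination hk
  have hpos : 0 < (blaschkePoly b k).eval b⁻¹ := by
    rw [eval_blaschkePoly, pow_succ _ (k + 1), ← mul_assoc, mul_comm b, mul_assoc,
      mul_inv_cancel₀ hb0.ne', mul_one]
    linarith [one_lt_inv_iff₀.2 ⟨hb0, hb1⟩]
  obtain ⟨x, ⟨hcx, hxb⟩, hx⟩ := intermediate_value_Ioo hcb.le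
    (blaschkePoly b k).continuous.continuousOn ⟨hneg, hpos⟩
  exact ⟨x, ⟨hc1.trans hcx, hxb⟩, hx⟩

lemma eq_of_isRoot_blaschkePoly_of_one_lt_norm {b : ℝ} (hb0 : b ≠ 0) (hb1 : |b| < 1) {k : ℕ}
    {x : ℝ} (hx1 : 1 < x) (hx : (blaschkePoly b k).IsRoot x) {w : ℂ} (hw1 : 1 < ‖w‖)
    (hw : (blaschkePoly (b : ℂ) k).IsRoot w) : w = x := by
  by_contra hwx
  obtain ⟨T, hTcard, hT⟩ := exists_finset_roots_blaschkePoly_norm_eq_one hb1 k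
  have hxC : (blaschkePoly (b : ℂ) k).IsRoot x := isRoot_blaschkePoly_ofReal.2 hx
  have hnx : ‖(x : ℂ)‖ = x := by rw [norm_real, Real.norm_of_nonneg (by linarith)]
  have hnxinv : ‖(x : ℂ)⁻¹‖ < 1 := by rw [norm_inv, hnx]; exact inv_lt_one_of_one_lt₀ hx1
  have hnotT : ∀ z : ℂ, ‖z‖ ≠ 1 → z ∉ T := fun z hz hzT ↦ hz (hT z hzT).1
  have hcard : (insert w (insert (x : ℂ) (insert (x : ℂ)⁻¹ T))).card = k + 3 := by
    rw [Finset.card_insert_of_notMem, Finset.card_insert_of_notMem,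
      Finset.card_insert_of_notMem (hnotT _ hnxinv.ne), hTcard]
    · simp only [Finset.mem_insert, not_or]
      refine ⟨fun h ↦ ?_, hnotT _ (by linarith)⟩
      linarith [congrArg norm h]
    · simp only [Finset.mem_insert, not_or]
      exact ⟨hwx, fun h ↦ by linarith [congrArg norm h], hnotT _ hw1.ne'⟩
  have hroots : ∀ z ∈ insert w (insert (x : ℂ) (insert (x : ℂ)⁻¹ T)),
      (blaschkePoly (b : ℂ) k).IsRoot z := by
    simp only [Finset.mem_insert, forall_eq_or_imp]
    exact ⟨hw, hxC, isRoot_blaschkePoly_inv hxC, fun z hz ↦ (hT z hz).2⟩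
  have := card_le_of_forall_isRoot_blaschkePoly (ofReal_ne_zero.2 hb0) hroots
  omega

lemma one_lt_norm_one_add_div_one_sub {t : ℂ} (ht : 0 < t.re) (ht1 : t ≠ 1) :
    1 < ‖(1 + t) / (1 - t)‖ := by
  have h0 : 0 < ‖1 - t‖ := norm_pos_iff.2 (sub_ne_zero.2 ht1.symm)
  rw [norm_div, one_lt_div h0, ← sq_lt_sq₀ h0.le (norm_nonneg _), Complex.sq_norm,
    Complex.sq_norm, normSq_apply, normSq_apply]
  simp only [add_re, sub_re, add_im, sub_im, one_re, one_im]
  nlinarith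

lemma one_add_div_one_sub_eq_iff {K : Type*} [Field K] {t x : K} (ht : t ≠ 1) (hx : x ≠ -1) :
    (1 + t) / (1 - t) = x ↔ t = (x - 1) / (x + 1) := by
  rw [div_eq_iff (sub_ne_zero.2 ht.symm), eq_div_iff (fun h ↦ hx (eq_neg_of_add_eq_zero_left h))]
  constructor <;> intro h <;> linear_combination h

lemma equation_iff_isRoot_blaschkePoly {K : Type*} [Field K] {p t : K} (hp : p ≠ 1)
    (ht : t ≠ 1) (k : ℕ) :
    (t ≠ 1 - 2 * p ∧ ((1 + t) / (1 - t)) ^ (k + 1) = (1 - 2 * p + t) / (1 - 2 * p - t)) ↔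
      (1 - p / (1 - p) * ((1 + t) / (1 - t)) ≠ 0 ∧
        (blaschkePoly (p / (1 - p)) k).IsRoot ((1 + t) / (1 - t))) := by
  set u := (1 + t) / (1 - t)
  set b := p / (1 - p)
  have hc : (1 - p) * (1 - t) ≠ 0 := mul_ne_zero (sub_ne_zero.2 hp.symm) (sub_ne_zero.2 ht.symm)
  have hnum : 1 - 2 * p + t = (1 - p) * (1 - t) * (u - b) := by
    simp only [u, b]; field_simp; ring
  have hden : 1 - 2 * p - t = (1 - p) * (1 - t) * (1 - b * u) := by
    simp only [u, b]; field_simp; ring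
  have hne : t ≠ 1 - 2 * p ↔ 1 - b * u ≠ 0 := by
    rw [Ne, eq_comm, ← sub_eq_zero, hden, mul_eq_zero, or_iff_right hc]
  rw [hne, hnum, hden, mul_div_mul_left _ _ hc]
  refine and_congr_right fun hbu ↦ ?_
  rw [eq_div_iff hbu, IsRoot, eval_blaschkePoly]
  constructor <;> intro h <;> linear_combination -h

/-- For `0 < p < 1/2` there exists `K` such that for every `k ≥ K`, the equation
`((1+t)/(1-t))^{k+1} = (1-2p+t)/(1-2p-t)` has exactly one complex solution `t` with
positive real part (and `t ≠ 1`, `t ≠ 1-2p`); moreover this solution is real and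
lies in `(0, 1)`. -/
theorem strong_unique_root (p : ℝ) (hp0 : 0 < p) (hp : p < 1 / 2) :
    ∃ K : ℕ, ∀ k : ℕ, K ≤ k →
      ∃ tk : ℝ, 0 < tk ∧ tk < 1 ∧
        ∀ t : ℂ,
          (0 < t.re ∧ t ≠ 1 ∧ t ≠ 1 - 2 * (p : ℂ) ∧
            ((1 + t) / (1 - t)) ^ (k + 1) = (1 - 2 * (p : ℂ) + t) / (1 - 2 * (p : ℂ) - t))
          ↔ t = (tk : ℂ) := by
  set b := p / (1 - p) with hb
  have hb0 : 0 < b := div_pos hp0 (by linarith)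
  have hb1 : b < 1 := (div_lt_one (by linarith)).2 (by linarith)
  have hbC : (b : ℂ) = p / (1 - p) := by push_cast [hb]; rfl
  have hp1 : (p : ℂ) ≠ 1 := by exact_mod_cast (by linarith : p ≠ 1)
  obtain ⟨K, hK⟩ := eventually_atTop.1 (eventually_exists_isRoot_blaschkePoly_mem_Ioo hb0 hb1)
  refine ⟨K, fun k hk ↦ ?_⟩
  obtain ⟨x, ⟨hx1, hxb⟩, hx⟩ := hK k hk
  have hx' : (x : ℂ) ≠ -1 := by exact_mod_cast (by linarith : x ≠ -1)
  have htk0 : 0 < (x - 1) / (x + 1) := div_pos (by linarith) (by linarith)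
  have htk1 : (x - 1) / (x + 1) < 1 := (div_lt_one (by linarith)).2 (by linarith)
  refine ⟨(x - 1) / (x + 1), htk0, htk1, fun t ↦ ⟨?_, ?_⟩⟩
  · rintro ⟨hre, ht1, h⟩
    rw [equation_iff_isRoot_blaschkePoly hp1 ht1, ← hbC] at h
    have hu := eq_of_isRoot_blaschkePoly_of_one_lt_norm hb0.ne' (abs_lt.2 ⟨by linarith, hb1⟩)
      hx1 hx (one_lt_norm_one_add_div_one_sub hre ht1) h.2
    rw [one_add_div_one_sub_eq_iff ht1 hx'] at hu
    exact_mod_cast hu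
  · rintro rfl
    have ht1 : (((x - 1) / (x + 1) : ℝ) : ℂ) ≠ 1 := by exact_mod_cast htk1.ne
    have hu : (1 + ((x - 1) / (x + 1) : ℝ)) / (1 - ((x - 1) / (x + 1) : ℝ)) = (x : ℂ) :=
      (one_add_div_one_sub_eq_iff ht1 hx').2 (by push_cast; rfl)
    refine ⟨by rwa [ofReal_re], ht1, ?_⟩
    rw [equation_iff_isRoot_blaschkePoly hp1 ht1, ← hbC, hu]
    refine ⟨?_, isRoot_blaschkePoly_ofReal.2 hx⟩
    have hbx : b * x < 1 := by
      simpa [mul_inv_cancel₀ hb0.ne'] using mul_lt_mul_of_pos_left hxb hb0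
    exact_mod_cast (sub_pos.2 hbx).ne'
end
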